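/- arXiv:2108.13623 — 2 statements merged into one kernel-verified Lean document; each statement's English description precedes it below -/
import Mathlib

section
/- Let N and k be integers with 0 < k < N. In the polynomial ring Λ[t] over the exterior algebra Λ on the 2k(N−k) generators ψ^i_s, ψ̄^i_s (1≤i≤k, 1≤s≤N−k), the element D(t) := det(I_k + tΩ) = Σ_{σ∈S_k} sgn(σ) ∏_{a=1}^{k} (δ_{a,σ(a)} + t·Ω_{a,σ(a)}) is invertible, and there exists a polynomial P(t) ∈ Λ[t] of degree at most N−k with D(t)·P(t) = 1. (Equivalently, writing 1/det(I_k + tΩ) = Σ_{m≥0} b_m t^m as a formal power series with coefficients b_m ∈ Λ, one has b_m = 0 for all m > N−k.) -/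
open scoped BigOperators

/-- The exterior algebra over `ℝ` on the `2kl` generators `ψ^i_s`, `ψ̄^i_s`
(`1 ≤ i ≤ k`, `1 ≤ s ≤ l`). -/
abbrev Lam (k l : ℕ) : Type :=
  ExteriorAlgebra ℝ (((Fin k × Fin l) ⊕ (Fin k × Fin l)) → ℝ)

/-- The generator `ψ^i_s`. -/
noncomputable def psi (k l : ℕ) (i : Fin k) (s : Fin l) : Lam k l :=
  ExteriorAlgebra.ι ℝ (Pi.single (Sum.inl (i, s)) 1)

/-- The generator `ψ̄^i_s`. -/
noncomputable def psibar (k l : ℕ) (i : Fin k) (s : Fin l) : Lam k l :=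
  ExteriorAlgebra.ι ℝ (Pi.single (Sum.inr (i, s)) 1)

/-- `Ω_{i,j} = Σ_{s=1}^{l} ψ^i_s ∧ ψ̄^j_s`. -/
noncomputable def Omega (k l : ℕ) (i j : Fin k) : Lam k l :=
  ∑ s, psi k l i s * psibar k l j s

/-- `det(Ω) = Σ_{σ ∈ S_k} sgn(σ) ∏_{a=1}^{k} Ω_{a,σ(a)}` (the entries `Ω_{i,j}` are even hence
commute, so the ordered product below agrees with any ordering of the factors). -/
noncomputable def detOmega (k l : ℕ) : Lam k l :=
  ∑ σ : Equiv.Perm (Fin k),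
    (Equiv.Perm.sign σ : ℤ) • (List.ofFn fun a => Omega k l a (σ a)).prod

/-- The product `∏_{s=1}^{l} ∏_{i=1}^{k} ψ^i_s ∧ ψ̄^i_s` (the factors are even hence commute,
so the ordering is immaterial). -/
noncomputable def topProd (k l : ℕ) : Lam k l :=
  (List.ofFn fun s : Fin l =>
    (List.ofFn fun i : Fin k => psi k l i s * psibar k l i s).prod).prod

/-- `D(t) = det(I_k + tΩ)` as an element of `Λ[t]`, defined by the permutation-sum formula. -/
noncomputable def Dpoly (N k : ℕ) : Polynomial (Lam k (N - k)) :=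
  ∑ σ : Equiv.Perm (Fin k),
    (Equiv.Perm.sign σ : ℤ) •
      (List.ofFn fun a : Fin k =>
        (if a = σ a then (1 : Polynomial (Lam k (N - k))) else 0) +
          Polynomial.C (Omega k (N - k) a (σ a)) * Polynomial.X).prod

namespace DetOmegaAux

open ExteriorAlgebra Polynomial Matrix

section Ext
variable {R M : Type*} [CommRing R] [AddCommGroup M] [Module R M]

lemma iota_swap (a b : M) :
    ι R a * ι R b = -(ι R b * ι R a) :=
  eq_neg_of_add_eq_zero_left (ι_add_mul_swap a b)

lemma iota_swap_mul (a b : M) (z : ExteriorAlgebra R M) :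
    ι R a * (ι R b * z) = -(ι R b * (ι R a * z)) := by
  rw [← mul_assoc, iota_swap, neg_mul, mul_assoc]

lemma iota_sq_mul (a : M) (z : ExteriorAlgebra R M) : ι R a * (ι R a * z) = 0 := by
  rw [← mul_assoc, ι_sq_zero, zero_mul]

lemma quad (a b d : M) : (ι R a * ι R b) * (ι R a * ι R d) = 0 := by
  rw [mul_assoc, iota_swap_mul b a (ι R d), mul_neg, iota_sq_mul, neg_zero]

lemma pair_central (a b : M) :
    (ι R a * ι R b) ∈ Subring.center (ExteriorAlgebra R M) := by
  rw [Subring.mem_center_iff]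
  intro g
  induction g using ExteriorAlgebra.induction with
  | algebraMap r => exact Algebra.commutes r _
  | ι m =>
    rw [iota_swap_mul m a (ι R b), iota_swap m b, mul_neg, neg_neg, mul_assoc]
  | mul x y hx hy => rw [mul_assoc, hy, ← mul_assoc, hx, mul_assoc]
  | add x y hx hy => rw [add_mul, hx, hy, mul_add]

end Ext

section Nilp
variable {S : Type*} [CommRing S] {ι₁ σ₁ : Type*} [Fintype ι₁] [Fintype σ₁]
  [DecidableEq ι₁]

lemma matrix_pow_eq_zero (g : ι₁ × σ₁ → ι₁ → S)
    (hg : ∀ p j j', g p j * g p j' = 0) :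
    (Matrix.of fun i j => ∑ s, g (i, s) j) ^ (Fintype.card ι₁ * Fintype.card σ₁ + 1) = 0 := by
  classical
  set M : Matrix ι₁ ι₁ S := Matrix.of fun i j => ∑ s, g (i, s) j with hMdef
  set K := Fintype.card ι₁ * Fintype.card σ₁ with hK
  let T : ℕ → AddSubmonoid S := fun m => AddSubmonoid.closure
    {x | ∃ c : Fin m → ι₁ × σ₁, ∃ d : Fin m → ι₁, x = ∏ r, g (c r) (d r)}
  have hmul : ∀ m (x : S), x ∈ T m → ∀ p j, x * g p j ∈ T (m + 1) := by
    intro m x hx p j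
    refine AddSubmonoid.closure_induction ?_ ?_ ?_ hx
    · rintro y ⟨c, d, rfl⟩
      refine AddSubmonoid.subset_closure ⟨Fin.snoc c p, Fin.snoc d j, ?_⟩
      rw [Fin.prod_univ_castSucc]
      simp
    · rw [zero_mul]; exact zero_mem _
    · intro x y _ _ hx hy
      rw [add_mul]; exact add_mem hx hy
  have hmem : ∀ m i j, (M ^ m) i j ∈ T m := by
    intro m
    induction m with
    | zero =>
      intro i j
      rw [pow_zero]
      by_cases h : i = j
      · subst h
        have h1 : (1 : Matrix ι₁ ι₁ S) i i = 1 := Matrix.one_apply_eq i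
        rw [h1]
        exact AddSubmonoid.subset_closure ⟨Fin.elim0, Fin.elim0, by simp⟩
      · rw [Matrix.one_apply_ne h]; exact zero_mem _
    | succ m ih =>
      intro i j
      rw [pow_succ, Matrix.mul_apply]
      refine sum_mem fun i' _ => ?_
      have hMij : M i' j = ∑ s, g (i', s) j := rfl
      rw [hMij, Finset.mul_sum]
      exact sum_mem fun s _ => hmul m _ (ih i i') (i', s) j
  have hzero : ∀ x ∈ T (K + 1), x = 0 := by
    intro x hx
    refine AddSubmonoid.closure_induction ?_ rfl (fun a b _ _ ha hb => by rw [ha, hb, add_zero]) hx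
    rintro y ⟨c, d, rfl⟩
    have hlt : Fintype.card (ι₁ × σ₁) < Fintype.card (Fin (K + 1)) := by
      simp [hK, Fintype.card_prod]
    obtain ⟨r, r', hne, hc⟩ := Fintype.exists_ne_map_eq_of_card_lt c hlt
    have h0 : g (c r) (d r) * g (c r') (d r') = 0 := by
      rw [hc]; exact hg _ _ _
    have hsub : ({r, r'} : Finset (Fin (K + 1))) ⊆ Finset.univ := Finset.subset_univ _
    calc (∏ t, g (c t) (d t))
        = (∏ t ∈ Finset.univ \ {r, r'}, g (c t) (d t)) *
          ∏ t ∈ ({r, r'} : Finset (Fin (K + 1))), g (c t) (d t) := (Finset.prod_sdiff hsub).symm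
      _ = 0 := by rw [Finset.prod_pair hne, h0, mul_zero]
  ext i j
  rw [Matrix.zero_apply]
  exact hzero _ (hmem (K + 1) i j)

end Nilp



section Det
variable {S : Type*} [CommRing S] {n : Type*} [Fintype n] [DecidableEq n]

lemma derivative_finset_prod {ι : Type*} [DecidableEq ι] (s : Finset ι) (f : ι → S[X]) :
    derivative (∏ i ∈ s, f i) =
      ∑ b ∈ s, (∏ i ∈ s.erase b, f i) * derivative (f b) := by
  induction s using Finset.induction_on with
  | empty => simp
  | insert _ _ ha ih =>
    rename_i a s
    rw [Finset.prod_insert ha, derivative_mul, ih, Finset.sum_insert ha,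
      Finset.erase_insert ha, Finset.mul_sum]
    congr 1
    · ring
    refine Finset.sum_congr rfl fun b hb => ?_
    have hba : b ≠ a := fun h => ha (h ▸ hb)
    rw [Finset.erase_insert_of_ne (Ne.symm hba),
      Finset.prod_insert (fun h => ha (Finset.mem_of_mem_erase h))]
    ring

lemma derivative_det (A : Matrix n n S[X]) :
    derivative A.det =
      ∑ i, (A.updateCol i fun j => derivative (A j i)).det := by
  rw [Matrix.det_apply, map_sum]
  have hupd : ∀ (σ : Equiv.Perm n) (i : n),
      (∏ a, (A.updateCol i fun j => derivative (A j i)) (σ a) a)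
        = derivative (A (σ i) i) * ∏ a ∈ Finset.univ.erase i, A (σ a) a := by
    intro σ i
    rw [← Finset.mul_prod_erase Finset.univ _ (Finset.mem_univ i)]
    congr 1
    · simp [Matrix.updateCol_apply]
    · refine Finset.prod_congr rfl fun a ha => ?_
      rw [Matrix.updateCol_apply, if_neg (Finset.ne_of_mem_erase ha)]
  have hrhs : ∀ i : n, (A.updateCol i fun j => derivative (A j i)).det
      = ∑ σ : Equiv.Perm n, Equiv.Perm.sign σ •
          (derivative (A (σ i) i) * ∏ a ∈ Finset.univ.erase i, A (σ a) a) := by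
    intro i
    rw [Matrix.det_apply]
    exact Finset.sum_congr rfl fun σ _ => by rw [hupd]
  simp_rw [hrhs]
  rw [Finset.sum_comm]
  refine Finset.sum_congr rfl fun σ _ => ?_
  have hds : ∀ (u : ℤˣ) (p : S[X]), derivative (u • p) = u • derivative p := fun u p => by
    rw [Units.smul_def, Units.smul_def, map_zsmul]
  rw [hds, derivative_finset_prod, Finset.smul_sum]
  refine Finset.sum_congr rfl fun i _ => ?_
  rw [mul_comm]

lemma derivative_entry (M : Matrix n n S) (i j : n) :
    derivative ((1 + (X : S[X]) • M.map C) j i) = (M.map C) j i := by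
  simp [Matrix.add_apply, Matrix.smul_apply, Matrix.one_apply, Matrix.map_apply,
    smul_eq_mul, apply_ite derivative]

lemma logDeriv (M : Matrix n n S) (J : ℕ) (hM : M ^ (J + 2) = 0) :
    derivative (Matrix.det (1 + (X : S[X]) • M.map C)) =
      Matrix.det (1 + (X : S[X]) • M.map C) *
        ∑ j ∈ Finset.range (J + 1), (-X) ^ j * C (Matrix.trace (M ^ (j + 1))) := by
  set A : Matrix n n S[X] := 1 + (X : S[X]) • M.map C with hA
  set B : Matrix n n S[X] := M.map C with hB
  have hBpow : ∀ m : ℕ, B ^ m = (M ^ m).map C := by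
    intro m
    rw [hB, ← RingHom.mapMatrix_apply, ← map_pow, RingHom.mapMatrix_apply]
  rw [derivative_det]
  have h1 : ∀ i : n, (A.updateCol i fun j => derivative (A j i)).det
      = Matrix.cramer A (fun j => B j i) i := by
    intro i
    rw [Matrix.cramer_apply]
    have hfun : (fun j => derivative (A j i)) = fun j => B j i :=
      funext fun j => by rw [hA, hB]; exact derivative_entry M i j
    rw [hfun]
  simp_rw [h1, Matrix.cramer_eq_adjugate_mulVec]
  have h2 : (∑ i, (Matrix.adjugate A *ᵥ fun j => B j i) i)
      = Matrix.trace (Matrix.adjugate A * B) := by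
    simp [Matrix.trace, Matrix.mulVec, Matrix.mul_apply, Matrix.diag, dotProduct]
  rw [h2]
  set G : Matrix n n S[X] := ∑ j ∈ Finset.range (J + 1), ((-X : S[X]) ^ j) • B ^ (j + 1)
    with hG
  have hAG : A * G = B := by
    have hBG : B * G = ∑ j ∈ Finset.range (J + 1), ((-X : S[X]) ^ j) • B ^ (j + 2) := by
      rw [hG, Finset.mul_sum]
      refine Finset.sum_congr rfl fun j _ => ?_
      rw [Matrix.mul_smul, ← pow_succ']
    have hXBG : (X : S[X]) • (B * G)
        = ∑ j ∈ Finset.range (J + 1), -(((-X : S[X]) ^ (j + 1)) • B ^ (j + 2)) := by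
      rw [hBG, Finset.smul_sum]
      refine Finset.sum_congr rfl fun j _ => ?_
      rw [smul_smul, ← neg_smul]
      congr 1
      rw [pow_succ]
      ring
    rw [hA, Matrix.add_mul, one_mul, Matrix.smul_mul, hXBG, hG]
    rw [← Finset.sum_add_distrib]
    have : ∀ j ∈ Finset.range (J + 1),
        ((-X : S[X]) ^ j) • B ^ (j + 1) + -(((-X : S[X]) ^ (j + 1)) • B ^ (j + 2))
          = (fun m => ((-X : S[X]) ^ m) • B ^ (m + 1)) j
            - (fun m => ((-X : S[X]) ^ m) • B ^ (m + 1)) (j + 1) := by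
      intro j _
      rw [sub_eq_add_neg]
    rw [Finset.sum_congr rfl this, Finset.sum_range_sub']
    simp only [pow_zero, one_smul, zero_add, pow_one]
    have hB0 : B ^ (J + 2) = 0 := by
      rw [hBpow, hM]
      ext i j
      simp
    rw [hB0, smul_zero, sub_zero]
  have h3 : Matrix.adjugate A * B = A.det • G := by
    calc Matrix.adjugate A * B = Matrix.adjugate A * (A * G) := by rw [hAG]
      _ = (Matrix.adjugate A * A) * G := (Matrix.mul_assoc _ _ _).symm
      _ = (A.det • (1 : Matrix n n S[X])) * G := by rw [Matrix.adjugate_mul]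
      _ = A.det • G := by rw [Matrix.smul_mul, Matrix.one_mul]
  rw [h3, Matrix.trace_smul, smul_eq_mul]
  congr 1
  rw [hG, Matrix.trace_sum]
  refine Finset.sum_congr rfl fun j _ => ?_
  rw [Matrix.trace_smul, smul_eq_mul, hBpow]
  congr 1
  simp [Matrix.trace, Matrix.diag, Matrix.map_apply, map_sum]

lemma coeff_zero_det (M : Matrix n n S) :
    (Matrix.det (1 + (X : S[X]) • M.map C)).coeff 0 = 1 := by
  rw [Polynomial.coeff_zero_eq_eval_zero]
  have h := _root_.eval_det_add_X_smul (1 : Matrix n n S[X]) M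
  simpa using h

lemma det_apply_comm (M : Matrix n n S) :
    M.det = ∑ σ : Equiv.Perm n, Equiv.Perm.sign σ • ∏ i, M i (σ i) := by
  conv_lhs => rw [← Matrix.det_transpose M]
  rw [Matrix.det_apply]
  rfl

end Det


section SumComm
variable {M : Type*} [AddCommMonoid M]

lemma sum_comm3 {α β γ : Type*} [Fintype α] [Fintype β] [Fintype γ]
    (f : α → β → γ → M) :
    (∑ a, ∑ b, ∑ c, f a b c) = ∑ b, ∑ c, ∑ a, f a b c :=
  Eq.trans Finset.sum_comm (Finset.sum_congr rfl fun _ _ => Finset.sum_comm)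

lemma sum_comm4 {α β γ δ : Type*} [Fintype α] [Fintype β] [Fintype γ] [Fintype δ]
    (f : α → β → γ → δ → M) :
    (∑ a, ∑ b, ∑ c, ∑ d, f a b c d) = ∑ b, ∑ c, ∑ d, ∑ a, f a b c d :=
  Eq.trans Finset.sum_comm (Finset.sum_congr rfl fun b _ => sum_comm3 fun a c d => f a b c d)

end SumComm

section Specific
variable (k l : ℕ)

noncomputable def xiC (i : Fin k) (s : Fin l) (j : Fin k) : Subring.center (Lam k l) :=
  ⟨psi k l i s * psibar k l j s, pair_central _ _⟩

noncomputable def xibarC (s : Fin l) (i : Fin k) (u : Fin l) : Subring.center (Lam k l) :=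
  ⟨psibar k l i s * psi k l i u, pair_central _ _⟩

lemma xiC_mul (i : Fin k) (s : Fin l) (j j' : Fin k) :
    xiC k l i s j * xiC k l i s j' = 0 :=
  Subtype.ext (quad _ _ _)

lemma xibarC_mul (s : Fin l) (i : Fin k) (u u' : Fin l) :
    xibarC k l s i u * xibarC k l s i u' = 0 :=
  Subtype.ext (quad _ _ _)

noncomputable def OmC : Matrix (Fin k) (Fin k) (Subring.center (Lam k l)) :=
  Matrix.of fun i j => ∑ s, xiC k l i s j

noncomputable def OmC' : Matrix (Fin l) (Fin l) (Subring.center (Lam k l)) :=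
  Matrix.of fun s u => ∑ i, xibarC k l s i u

lemma OmC_pow_eq_zero : OmC k l ^ (k * l + 1) = 0 := by
  have h := matrix_pow_eq_zero (S := Subring.center (Lam k l))
      (g := fun (p : Fin k × Fin l) (j : Fin k) => xiC k l p.1 p.2 j)
      (fun p j j' => xiC_mul k l p.1 p.2 j j')
  simpa [OmC, Fintype.card_fin] using h

lemma OmC'_pow_eq_zero : OmC' k l ^ (l * k + 1) = 0 := by
  have h := matrix_pow_eq_zero (S := Subring.center (Lam k l))
      (g := fun (p : Fin l × Fin k) (u : Fin l) => xibarC k l p.1 p.2 u)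
      (fun p u u' => xibarC_mul k l p.1 p.2 u u')
  simpa [OmC', Fintype.card_fin] using h

lemma coe_sum {α : Type*} (t : Finset α) (f : α → Subring.center (Lam k l)) :
    ((∑ a ∈ t, f a : Subring.center (Lam k l)) : Lam k l) = ∑ a ∈ t, (f a : Lam k l) :=
  AddSubmonoidClass.coe_finset_sum f t

lemma coe_OmC (i j : Fin k) : ((OmC k l i j : Lam k l)) = Omega k l i j := by
  show ((∑ s, xiC k l i s j : Subring.center (Lam k l)) : Lam k l) = _
  rw [coe_sum]
  rfl

lemma coe_OmC' (u u' : Fin l) :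
    ((OmC' k l u u' : Lam k l)) = ∑ i, psibar k l i u * psi k l i u' := by
  show ((∑ i, xibarC k l u i u' : Subring.center (Lam k l)) : Lam k l) = _
  rw [coe_sum]
  rfl

lemma center_comm (w : Subring.center (Lam k l)) (x : Lam k l) :
    x * (w : Lam k l) = (w : Lam k l) * x :=
  Subring.mem_center_iff.mp w.2 x

set_option maxHeartbeats 1000000 in
lemma lemA : ∀ (j : ℕ) (i i' : Fin k),
    ((OmC k l ^ (j + 1)) i i' : Lam k l)
      = ∑ s, ∑ u, psi k l i s *
          (((OmC' k l ^ j) s u : Lam k l) * psibar k l i' u) := by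
  intro j
  induction j with
  | zero =>
    intro i i'
    rw [pow_one, coe_OmC]
    simp only [pow_zero, Omega]
    refine Finset.sum_congr rfl fun s _ => ?_
    rw [Finset.sum_eq_single s]
    · rw [Matrix.one_apply_eq]
      simp
    · intro u _ hus
      rw [Matrix.one_apply_ne (Ne.symm hus)]
      simp
    · intro h
      exact absurd (Finset.mem_univ s) h
  | succ j ih =>
    intro i i'
    have lhs_eq : ((OmC k l ^ (j + 1 + 1)) i i' : Lam k l)
        = ∑ s, ∑ u, ∑ u', ∑ i'',
            psi k l i s * (((OmC' k l ^ j) s u : Lam k l) *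
              (psibar k l i'' u * (psi k l i'' u' * psibar k l i' u'))) := by
      rw [pow_succ, Matrix.mul_apply, coe_sum]
      have step1 : ∀ i'' : Fin k,
          (((OmC k l ^ (j + 1)) i i'' * OmC k l i'' i' : Subring.center (Lam k l)) : Lam k l)
            = (∑ s, ∑ u, psi k l i s * (((OmC' k l ^ j) s u : Lam k l) * psibar k l i'' u)) *
              (∑ u', psi k l i'' u' * psibar k l i' u') := by
        intro i''
        rw [MulMemClass.coe_mul, ih i i'', coe_OmC]
        rfl
      rw [Finset.sum_congr rfl fun i'' _ => step1 i'']
      simp only [Finset.sum_mul, Finset.mul_sum, mul_assoc]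
      rw [sum_comm4, sum_comm4]
      exact Finset.sum_congr rfl fun s _ => Finset.sum_congr rfl fun u _ => Finset.sum_comm
    rw [lhs_eq]
    refine Finset.sum_congr rfl fun s _ => ?_
    have rhs_eq : ∀ u' : Fin l,
        psi k l i s * (((OmC' k l ^ (j + 1)) s u' : Lam k l) * psibar k l i' u')
          = ∑ u, ∑ i'',
              psi k l i s * (((OmC' k l ^ j) s u : Lam k l) *
                (psibar k l i'' u * (psi k l i'' u' * psibar k l i' u'))) := by
      intro u'
      rw [pow_succ, Matrix.mul_apply, coe_sum]
      have : ∀ u : Fin l,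
          (((OmC' k l ^ j) s u * OmC' k l u u' : Subring.center (Lam k l)) : Lam k l)
            = ∑ i'', ((OmC' k l ^ j) s u : Lam k l) *
                (psibar k l i'' u * psi k l i'' u') := by
        intro u
        rw [MulMemClass.coe_mul, coe_OmC', Finset.mul_sum]
      rw [Finset.sum_congr rfl fun u _ => this u]
      simp only [Finset.sum_mul, Finset.mul_sum, mul_assoc]
    rw [Finset.sum_congr rfl fun u' _ => rhs_eq u']
    exact Finset.sum_comm

set_option maxHeartbeats 1000000 in
lemma traceId (j : ℕ) :
    Matrix.trace (OmC k l ^ (j + 1)) + Matrix.trace (OmC' k l ^ (j + 1)) = 0 := by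
  apply Subtype.ext
  have h1 : ((Matrix.trace (OmC k l ^ (j + 1)) : Subring.center (Lam k l)) : Lam k l)
      = ∑ s, ∑ u, ∑ i, ((OmC' k l ^ j) s u : Lam k l) * (psi k l i s * psibar k l i u) := by
    rw [Matrix.trace, coe_sum]
    have : ∀ i : Fin k, (((OmC k l ^ (j + 1)).diag i : Subring.center (Lam k l)) : Lam k l)
        = ∑ s, ∑ u, ((OmC' k l ^ j) s u : Lam k l) * (psi k l i s * psibar k l i u) := by
      intro i
      rw [Matrix.diag_apply, lemA k l j i i]
      refine Finset.sum_congr rfl fun s _ => Finset.sum_congr rfl fun u _ => ?_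
      rw [← mul_assoc, center_comm, mul_assoc]
    rw [Finset.sum_congr rfl fun i _ => this i]
    exact sum_comm3 _
  have h2 : ((Matrix.trace (OmC' k l ^ (j + 1)) : Subring.center (Lam k l)) : Lam k l)
      = ∑ s, ∑ u, ∑ i, -(((OmC' k l ^ j) s u : Lam k l) * (psi k l i s * psibar k l i u)) := by
    rw [Matrix.trace, coe_sum]
    refine Finset.sum_congr rfl fun s _ => ?_
    rw [Matrix.diag_apply, pow_succ, Matrix.mul_apply, coe_sum]
    refine Finset.sum_congr rfl fun u _ => ?_
    rw [MulMemClass.coe_mul, coe_OmC', Finset.mul_sum]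
    refine Finset.sum_congr rfl fun i _ => ?_
    have hswap : psibar k l i u * psi k l i s = -(psi k l i s * psibar k l i u) :=
      iota_swap _ _
    rw [hswap, mul_neg]
  have hsplit : (((Matrix.trace (OmC k l ^ (j + 1)) + Matrix.trace (OmC' k l ^ (j + 1))) :
      Subring.center (Lam k l)) : Lam k l)
      = ((Matrix.trace (OmC k l ^ (j + 1)) : Subring.center (Lam k l)) : Lam k l)
        + ((Matrix.trace (OmC' k l ^ (j + 1)) : Subring.center (Lam k l)) : Lam k l) := rfl
  rw [hsplit, h1, h2, ← Finset.sum_add_distrib]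
  refine Finset.sum_eq_zero fun s _ => ?_
  rw [← Finset.sum_add_distrib]
  refine Finset.sum_eq_zero fun u _ => ?_
  rw [← Finset.sum_add_distrib]
  refine Finset.sum_eq_zero fun i _ => ?_
  rw [add_neg_cancel]

end Specific

section Final
variable (k l : ℕ)

lemma center_cancel (c : Subring.center (Lam k l)) (n : ℕ)
    (h : c * ((n : Subring.center (Lam k l)) + 1) = 0) : c = 0 := by
  have hL : (c : Lam k l) * (((n : ℕ) : Lam k l) + 1) = 0 := by
    have := congrArg (fun x : Subring.center (Lam k l) => (x : Lam k l)) h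
    simpa using this
  have hcast : (((n : ℕ) : Lam k l) + 1) = algebraMap ℝ (Lam k l) ((n : ℝ) + 1) := by
    simp
  rw [hcast, ← Algebra.commutes ((n : ℝ) + 1) (c : Lam k l), ← Algebra.smul_def] at hL
  have hne : ((n : ℝ) + 1) ≠ 0 := by positivity
  have hc : (c : Lam k l) = 0 := by
    have := congrArg (fun x => ((n : ℝ) + 1)⁻¹ • x) hL
    simpa [smul_smul, inv_mul_cancel₀ hne] using this
  exact Subtype.ext hc

set_option maxHeartbeats 1000000 in
lemma main_identity :
    Matrix.det (1 + (X : Polynomial (Subring.center (Lam k l))) • (OmC k l).map Polynomial.C) *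
      Matrix.det (1 + (X : Polynomial (Subring.center (Lam k l))) • (OmC' k l).map Polynomial.C)
      = 1 := by
  set S := Subring.center (Lam k l) with hS
  set p : S[X] := Matrix.det (1 + (X : S[X]) • (OmC k l).map Polynomial.C) with hp
  set q : S[X] := Matrix.det (1 + (X : S[X]) • (OmC' k l).map Polynomial.C) with hq
  set J := k * l with hJ
  have hM : OmC k l ^ (J + 2) = 0 := pow_eq_zero_of_le (by omega) (OmC_pow_eq_zero k l)
  have hM' : OmC' k l ^ (J + 2) = 0 := by
    refine pow_eq_zero_of_le ?_ (OmC'_pow_eq_zero k l)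
    have : l * k = k * l := Nat.mul_comm l k
    omega
  have hT : (∑ j ∈ Finset.range (J + 1),
        (-X) ^ j * Polynomial.C (Matrix.trace (OmC k l ^ (j + 1))))
      + (∑ j ∈ Finset.range (J + 1),
        (-X) ^ j * Polynomial.C (Matrix.trace (OmC' k l ^ (j + 1)))) = 0 := by
    rw [← Finset.sum_add_distrib]
    refine Finset.sum_eq_zero fun j _ => ?_
    rw [← mul_add, ← Polynomial.C_add, traceId, Polynomial.C_0, mul_zero]
  have hderiv : Polynomial.derivative (p * q) = 0 := by
    rw [Polynomial.derivative_mul, hp, hq, logDeriv _ J hM, logDeriv _ J hM', ← hp, ← hq]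
    have hcalc : ∀ A B : S[X], A + B = 0 → p * A * q + p * (q * B) = 0 := by
      intro A B h
      have e : p * A * q + p * (q * B) = (p * q) * (A + B) := by ring
      rw [e, h, mul_zero]
    exact hcalc _ _ hT
  have hc0 : (p * q).coeff 0 = 1 := by
    rw [Polynomial.mul_coeff_zero, hp, hq, coeff_zero_det, coeff_zero_det, one_mul]
  refine Polynomial.ext fun n => ?_
  cases n with
  | zero => rw [hc0, Polynomial.coeff_one]; simp
  | succ n =>
    have hd := congrArg (fun r => Polynomial.coeff r n) hderiv
    simp only [Polynomial.coeff_derivative, Polynomial.coeff_zero] at hd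
    have hz := center_cancel k l _ n hd
    rw [hz, Polynomial.coeff_one]
    simp

set_option maxHeartbeats 1000000 in
lemma map_detD :
    Polynomial.map ((Subring.center (Lam k l)).subtype)
        (Matrix.det (1 + (X : Polynomial (Subring.center (Lam k l))) • (OmC k l).map Polynomial.C))
      = ∑ σ : Equiv.Perm (Fin k),
          (Equiv.Perm.sign σ : ℤ) •
            (List.ofFn fun a : Fin k =>
              (if a = σ a then (1 : Polynomial (Lam k l)) else 0) +
                Polynomial.C (Omega k l a (σ a)) * Polynomial.X).prod := by
  set S := Subring.center (Lam k l) with hS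
  set φ : S[X] →+* Polynomial (Lam k l) := Polynomial.mapRingHom (Subring.subtype S) with hφ
  show φ _ = _
  rw [det_apply_comm, map_sum]
  refine Finset.sum_congr rfl fun σ _ => ?_
  have husmul : ∀ (u : ℤˣ) (x : S[X]), φ (u • x) = (u : ℤ) • φ x := fun u x => by
    rw [Units.smul_def, map_zsmul]
  rw [husmul]
  congr 1
  rw [← List.prod_ofFn, map_list_prod φ, List.map_ofFn]
  refine congrArg List.prod (congrArg List.ofFn (funext fun a => ?_))
  show φ ((1 + (X : S[X]) • (OmC k l).map Polynomial.C) a (σ a)) = _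
  have hent : (1 + (X : S[X]) • (OmC k l).map Polynomial.C) a (σ a)
      = (if a = σ a then 1 else 0) + X * Polynomial.C (OmC k l a (σ a)) := by
    simp [Matrix.add_apply, Matrix.one_apply, Matrix.smul_apply, Matrix.map_apply, smul_eq_mul]
  rw [hent, map_add, _root_.map_mul]
  have h1 : φ (if a = σ a then 1 else 0) = (if a = σ a then 1 else 0) := by
    split <;> simp
  have hX : φ X = X := by simp [hφ]
  have hC : φ (Polynomial.C (OmC k l a (σ a))) = Polynomial.C (Omega k l a (σ a)) := by
    rw [hφ, Polynomial.coe_mapRingHom, Polynomial.map_C]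
    exact congrArg Polynomial.C (coe_OmC k l a (σ a))
  rw [h1, hX, hC, Polynomial.X_mul_C]

lemma degE_le :
    (Matrix.det (1 + (X : Polynomial (Subring.center (Lam k l))) • (OmC' k l).map
        Polynomial.C)).degree ≤ (l : WithBot ℕ) := by
  set S := Subring.center (Lam k l) with hS
  rw [Matrix.det_apply]
  refine le_trans (Polynomial.degree_sum_le _ _) ?_
  refine Finset.sup_le fun σ _ => ?_
  rw [Units.smul_def, zsmul_eq_mul]
  refine le_trans (Polynomial.degree_mul_le _ _) ?_
  have h1 : (((Equiv.Perm.sign σ : ℤ) : S[X])).degree ≤ 0 := Polynomial.degree_intCast_le _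
  have h2 : (∏ s, (1 + (X : S[X]) • (OmC' k l).map Polynomial.C) (σ s) s).degree
      ≤ (l : WithBot ℕ) := by
    refine le_trans (Polynomial.degree_prod_le _ _) ?_
    have hent : ∀ s : Fin l,
        ((1 + (X : S[X]) • (OmC' k l).map Polynomial.C) (σ s) s).degree
          ≤ ((1 : ℕ) : WithBot ℕ) := by
      intro s
      have he : (1 + (X : S[X]) • (OmC' k l).map Polynomial.C) (σ s) s
          = (if σ s = s then 1 else 0) + X * Polynomial.C (OmC' k l (σ s) s) := by
        simp [Matrix.add_apply, Matrix.one_apply, Matrix.smul_apply, Matrix.map_apply,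
          smul_eq_mul]
      rw [he]
      refine le_trans (Polynomial.degree_add_le _ _) (max_le ?_ ?_)
      · split
        · exact le_trans Polynomial.degree_one_le (by exact_mod_cast Nat.zero_le 1)
        · simp
      · refine le_trans (Polynomial.degree_mul_le _ _) ?_
        refine le_trans (add_le_add Polynomial.degree_X_le Polynomial.degree_C_le) ?_
        simp
    refine le_trans (Finset.sum_le_sum fun s _ => hent s) ?_
    rw [← Nat.cast_sum]
    simp
  calc (((Equiv.Perm.sign σ : ℤ) : S[X])).degree
        + (∏ s, (1 + (X : S[X]) • (OmC' k l).map Polynomial.C) (σ s) s).degree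
      ≤ 0 + (l : WithBot ℕ) := add_le_add h1 h2
    _ = (l : WithBot ℕ) := zero_add _

end Final

end DetOmegaAux

/-- `D(t) = det(I_k + tΩ)` is invertible in `Λ[t]`, with an inverse of degree at most `N - k`;
equivalently, the coefficients `b_m` of the formal power series `1/det(I_k + tΩ)` vanish for
`m > N - k`. -/
theorem det_one_add_t_Omega_isUnit_and_inv_degree_le (N k : ℕ) (hk : 0 < k) (hkN : k < N) :
    IsUnit (Dpoly N k) ∧
      ∃ P : Polynomial (Lam k (N - k)),
        P.degree ≤ ((N - k : ℕ) : WithBot ℕ) ∧ Dpoly N k * P = 1 := by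
  classical
  have hid := DetOmegaAux.main_identity k (N - k)
  set S := Subring.center (Lam k (N - k)) with hS
  set φ : Polynomial S →+* Polynomial (Lam k (N - k)) :=
    Polynomial.mapRingHom (Subring.subtype S) with hφ
  set p : Polynomial S :=
    Matrix.det (1 + (Polynomial.X : Polynomial S) • (DetOmegaAux.OmC k (N - k)).map Polynomial.C)
    with hp
  set q : Polynomial S :=
    Matrix.det (1 + (Polynomial.X : Polynomial S) • (DetOmegaAux.OmC' k (N - k)).map Polynomial.C)
    with hq
  have hD : φ p = Dpoly N k := by
    have := DetOmegaAux.map_detD k (N - k)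
    rw [Dpoly]
    exact this
  have h1 : Dpoly N k * φ q = 1 := by
    have := congrArg φ hid
    rw [map_mul, map_one] at this
    rw [← hD]
    exact this
  have h2 : φ q * Dpoly N k = 1 := by
    have hid' : q * p = 1 := by rw [mul_comm]; exact hid
    have := congrArg φ hid'
    rw [map_mul, map_one] at this
    rw [← hD]
    exact this
  refine ⟨⟨⟨Dpoly N k, φ q, h1, h2⟩, rfl⟩, φ q, ?_, h1⟩
  have hdeg : (φ q).degree ≤ q.degree := by
    rw [hφ, Polynomial.coe_mapRingHom]
    exact Polynomial.degree_map_le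
  exact le_trans hdeg (DetOmegaAux.degE_le k (N - k))
end

section
/- Let k be a positive integer. In the exterior algebra Λ on the 2k generators ψ^i, ψ̄^i (1≤i≤k), the determinant of the k×k matrix Ω with entries Ω_{i,j} = ψ^i ∧ ψ̄^j satisfies det(Ω) = k! · (ψ^1 ∧ ψ̄^1) ∧ (ψ^2 ∧ ψ̄^2) ∧ ⋯ ∧ (ψ^k ∧ ψ̄^k). -/
open scoped BigOperators

/-- The exterior algebra over `ℝ` on the `2k` generators `ψ^i`, `ψ̄^i` (`1 ≤ i ≤ k`). -/
abbrev Lam1 (k : ℕ) : Type := ExteriorAlgebra ℝ ((Fin k ⊕ Fin k) → ℝ)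

/-- The generator `ψ^i`. -/
noncomputable def psi1 (k : ℕ) (i : Fin k) : Lam1 k :=
  ExteriorAlgebra.ι ℝ (Pi.single (Sum.inl i) 1)

/-- The generator `ψ̄^i`. -/
noncomputable def psibar1 (k : ℕ) (i : Fin k) : Lam1 k :=
  ExteriorAlgebra.ι ℝ (Pi.single (Sum.inr i) 1)

/-- If `x` anticommutes with every element of a list, it (anti)commutes with its product. -/
lemma mul_list_prod_anticomm {A : Type*} [Ring A] (x : A) :
    ∀ L : List A, (∀ y ∈ L, x * y = -(y * x)) →
      x * L.prod = ((-1 : ℤ) ^ L.length) • (L.prod * x)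
  | [], _ => by simp
  | y :: L, h => by
    have h1 : x * y = -(y * x) := h y List.mem_cons_self
    have h2 := mul_list_prod_anticomm x L (fun z hz => h z (List.mem_cons_of_mem y hz))
    rw [List.prod_cons, List.length_cons, ← mul_assoc, h1, neg_mul, mul_assoc, h2,
      mul_smul_comm, pow_succ, ← neg_smul, mul_assoc]
    congr 1
    ring

/-- Splitting an interleaved product of generators. -/
lemma prod_split {R M : Type*} [CommRing R] [AddCommGroup M] [Module R M] :
    ∀ (n : ℕ) (u v : Fin n → M),
      (List.ofFn fun a => ExteriorAlgebra.ι R (u a) * ExteriorAlgebra.ι R (v a)).prod =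
        ((-1 : ℤ) ^ (n * (n - 1) / 2)) •
          ((List.ofFn fun a => ExteriorAlgebra.ι R (u a)).prod *
            (List.ofFn fun a => ExteriorAlgebra.ι R (v a)).prod)
  | 0, u, v => by simp
  | n + 1, u, v => by
    have IH := prod_split (R := R) (M := M) n (fun i => u i.succ) (fun i => v i.succ)
    rw [List.ofFn_succ, List.ofFn_succ (f := fun a => ExteriorAlgebra.ι R (u a)),
      List.ofFn_succ (f := fun a => ExteriorAlgebra.ι R (v a)),
      List.prod_cons, List.prod_cons, List.prod_cons, IH]
    set U := (List.ofFn fun i : Fin n => ExteriorAlgebra.ι R (u i.succ)).prod with hU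
    set V := (List.ofFn fun i : Fin n => ExteriorAlgebra.ι R (v i.succ)).prod with hV
    have hcomm : ExteriorAlgebra.ι R (v 0) * U =
        ((-1 : ℤ) ^ n) • (U * ExteriorAlgebra.ι R (v 0)) := by
      have := mul_list_prod_anticomm (ExteriorAlgebra.ι R (v 0))
        (List.ofFn fun i : Fin n => ExteriorAlgebra.ι R (u i.succ)) ?_
      · simpa [hU] using this
      · intro y hy
        obtain ⟨i, rfl⟩ := List.mem_ofFn.mp hy
        have := ExteriorAlgebra.ι_add_mul_swap (R := R) (v 0) (u i.succ)
        exact eq_neg_of_add_eq_zero_left this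
    have hexp : (n + 1) * (n + 1 - 1) / 2 = n * (n - 1) / 2 + n := by
      rcases n with _ | m
      · simp
      · obtain ⟨t, ht⟩ := Nat.even_mul_succ_self m
        have h1 : (m + 1 + 1) * (m + 1 + 1 - 1) = m * (m + 1) + 2 * (m + 1) := by
          simp only [Nat.add_sub_cancel]; ring
        have h2 : (m + 1) * (m + 1 - 1) = m * (m + 1) := by
          simp only [Nat.add_sub_cancel]; ring
        omega
    rw [hexp, pow_add]
    calc ExteriorAlgebra.ι R (u 0) * ExteriorAlgebra.ι R (v 0) *
          (((-1 : ℤ) ^ (n * (n - 1) / 2)) • (U * V))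
        = ((-1 : ℤ) ^ (n * (n - 1) / 2)) •
            (ExteriorAlgebra.ι R (u 0) * ((ExteriorAlgebra.ι R (v 0) * U) * V)) := by
          rw [mul_smul_comm]
          congr 1
          simp only [mul_assoc]
      _ = ((-1 : ℤ) ^ (n * (n - 1) / 2) * (-1 : ℤ) ^ n) •
            (ExteriorAlgebra.ι R (u 0) * U * (ExteriorAlgebra.ι R (v 0) * V)) := by
          rw [hcomm, smul_mul_assoc, mul_smul_comm, smul_smul]
          congr 1
          simp only [mul_assoc]

/-- `det(Ω) = k! · (ψ^1 ∧ ψ̄^1) ∧ ⋯ ∧ (ψ^k ∧ ψ̄^k)` for the matrix `Ω_{i,j} = ψ^i ∧ ψ̄^j`,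
the determinant being given by the permutation-sum formula (the entries are even hence
commute, so the ordered products agree with any ordering of the factors). -/
theorem detOmega_rank_one_eq_factorial_smul (k : ℕ) (hk : 0 < k) :
    (∑ σ : Equiv.Perm (Fin k),
      (Equiv.Perm.sign σ : ℤ) •
        (List.ofFn fun a => psi1 k a * psibar1 k (σ a)).prod) =
      (k.factorial : ℝ) • (List.ofFn fun i => psi1 k i * psibar1 k i).prod := by
  classical
  set e : Fin k → (Fin k ⊕ Fin k) → ℝ := fun i => Pi.single (Sum.inr i) 1 with he
  have hsign : ∀ σ : Equiv.Perm (Fin k),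
      (List.ofFn fun a => psibar1 k (σ a)).prod =
        (Equiv.Perm.sign σ : ℤ) • (List.ofFn fun a => psibar1 k a).prod := by
    intro σ
    have h1 := ExteriorAlgebra.ιMulti_apply (R := ℝ) (n := k) (e ∘ σ)
    have h2 := ExteriorAlgebra.ιMulti_apply (R := ℝ) (n := k) e
    have h3 := (ExteriorAlgebra.ιMulti ℝ k).map_perm e σ
    simp only [h1, h2] at h3
    simpa [psibar1, he, Function.comp, Units.smul_def] using h3
  have key : ∀ σ : Equiv.Perm (Fin k),
      (Equiv.Perm.sign σ : ℤ) • (List.ofFn fun a => psi1 k a * psibar1 k (σ a)).prod =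
        (List.ofFn fun i => psi1 k i * psibar1 k i).prod := by
    intro σ
    have hs := prod_split (R := ℝ) k (fun i => Pi.single (Sum.inl i) 1) (fun a => e (σ a))
    have hid := prod_split (R := ℝ) k (fun i => Pi.single (Sum.inl i) 1) e
    have hσψ : (List.ofFn fun a => psi1 k a * psibar1 k (σ a)).prod =
        ((-1 : ℤ) ^ (k * (k - 1) / 2)) •
          ((List.ofFn fun a => psi1 k a).prod * (List.ofFn fun a => psibar1 k (σ a)).prod) := by
      simpa [psi1, psibar1, he] using hs
    have hidψ : (List.ofFn fun a => psi1 k a * psibar1 k a).prod =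
        ((-1 : ℤ) ^ (k * (k - 1) / 2)) •
          ((List.ofFn fun a => psi1 k a).prod * (List.ofFn fun a => psibar1 k a).prod) := by
      simpa [psi1, psibar1, he] using hid
    rw [hσψ, hsign σ, hidψ]
    rw [mul_smul_comm, smul_smul, smul_smul]
    congr 1
    have : (Equiv.Perm.sign σ : ℤ) * (Equiv.Perm.sign σ : ℤ) = 1 := by
      rw [← Units.val_mul, ← pow_two]
      simp
    linear_combination ((-1 : ℤ) ^ (k * (k - 1) / 2)) * this
  rw [Finset.sum_congr rfl (fun σ _ => key σ), Finset.sum_const, Finset.card_univ,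
    Fintype.card_perm, Fintype.card_fin, ← Nat.cast_smul_eq_nsmul ℝ]
end
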